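/- arXiv:math/0609340 — 4 statements merged into one kernel-verified Lean document; each statement's English description precedes it below -/
import Mathlib

section
/- There is a constant c_2 > 0 (depending on k, d, α, β, r_0) such that for all f ∈ 𝓗 and all ε > 0, μ(graph^𝐒(f)^{ε,Φ}) ≤ c_2 ε^{(d−k)w}, where w = Σ_{s=0}^{r_0} (1 − s/α) C(s+k−1, k−1). -/
open MeasureTheory Filter Set
open scoped RealInnerProductSpace

noncomputable section

abbrev Euc (n : ℕ) := EuclideanSpace ℝ (Fin n)

/-- The sup-norm `‖x‖_∞` of a vector. -/
def supNorm {n : ℕ} (x : Euc n) : ℝ := ⨆ i, |x i|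

/-- The unit cube `[0,1]^n`. -/
def unitCube (n : ℕ) : Set (Euc n) := {x | ∀ i, x i ∈ Set.Icc (0:ℝ) 1}

/-- The uniform probability measure on `[0,1]^n`. -/
def cubeUniform (n : ℕ) : Measure (Euc n) := volume.restrict (unitCube n)

/-- The angle between two linear subspaces of `ℝ^d`:
`max_{0 ≠ u ∈ H} min_{0 ≠ v ∈ K} arccos (⟨u,v⟩ / (‖u‖‖v‖))`. -/
def subAngle {d : ℕ} (H K : Submodule ℝ (Euc d)) : ℝ :=
  ⨆ u : {u : Euc d // u ∈ H ∧ u ≠ 0},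
    ⨅ v : {v : Euc d // v ∈ K ∧ v ≠ 0},
      Real.arccos (⟪u.1, v.1⟫ / (‖u.1‖ * ‖v.1‖))

/-- The Grassmannian `G(k,d)` of `k`-dimensional linear subspaces of `ℝ^d`. -/
def Grass (k d : ℕ) := {H : Submodule ℝ (Euc d) // Module.finrank ℝ H = k}

/-- The ball `B(H,ε)` in the Grassmannian, for the angle metric. -/
def GrassBall {k d : ℕ} (H : Grass k d) (ε : ℝ) : Set (Grass k d) :=
  {K | subAngle H.1 K.1 ≤ ε}

instance {k d : ℕ} : MeasurableSpace (Grass k d) :=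
  MeasurableSpace.generateFrom {S | ∃ H ε, S = GrassBall H ε}

/-- Action of an orthogonal transformation on the Grassmannian. -/
def rotGrass {k d : ℕ} (Q : Euc d ≃ₗᵢ[ℝ] Euc d) (H : Grass k d) : Grass k d :=
  ⟨H.1.map (Q.toLinearEquiv : Euc d →ₗ[ℝ] Euc d),
    (LinearEquiv.finrank_map_eq _ _).trans H.2⟩

/-- A measure on the Grassmannian invariant under the orthogonal group `O(d)`. -/
def IsOrthInvariant {k d : ℕ} (lam : Measure (Grass k d)) : Prop :=
  ∀ Q : Euc d ≃ₗᵢ[ℝ] Euc d, ∀ S : Set (Grass k d), MeasurableSet S →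
    lam (rotGrass Q ⁻¹' S) = lam S

/-- Partial derivative `∂_s f`. -/
def pd {k n : ℕ} (s : Fin k) (f : Euc k → Euc n) : Euc k → Euc n :=
  fun x => fderiv ℝ f x (EuclideanSpace.single s 1)

/-- Iterated partial derivatives along a list of directions. -/
def pdIter {k n : ℕ} (l : List (Fin k)) (f : Euc k → Euc n) : Euc k → Euc n :=
  l.foldr pd f

/-- The list of directions associated to a multi-index. -/
def listOf {k : ℕ} (s : Fin k → ℕ) : List (Fin k) :=
  (List.finRange k).foldr (fun i l => List.replicate (s i) i ++ l) []

/-- Partial derivative `f^{(𝐬)}` of multi-order `𝐬`. -/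
def mderiv {k n : ℕ} (s : Fin k → ℕ) (f : Euc k → Euc n) : Euc k → Euc n :=
  pdIter (listOf s) f

/-- `r = max {m ∈ ℕ : m < α}`. -/
def rr (α : ℝ) : ℕ := sSup {m : ℕ | (m : ℝ) < α}

/-- The Hölder class `H^{k,n}(α,β)`. -/
def Holder (k n : ℕ) (α β : ℝ) : Set (Euc k → Euc n) :=
  {f | Set.MapsTo f (unitCube k) (unitCube n) ∧
    (∀ l : List (Fin k), l.length < rr α → Differentiable ℝ (pdIter l f)) ∧
    (∀ s : Fin k → ℕ, (∑ i, s i) ≤ rr α → ∀ x ∈ unitCube k, supNorm (mderiv s f x) ≤ β) ∧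
    (∀ s : Fin k → ℕ, (∑ i, s i) = rr α → ∀ x ∈ unitCube k, ∀ y ∈ unitCube k,
      supNorm (mderiv s f x - mderiv s f y) ≤ β * supNorm (x - y) ^ (α - rr α))}

/-- The tangent space `f⃗(x) = span {∂_s f(x) : s}`. -/
def tangent {k d : ℕ} (f : Euc k → Euc d) (x : Euc k) : Submodule ℝ (Euc d) :=
  Submodule.span ℝ (Set.range fun s => pd s f x)

/-- The class `𝓕` of the paper. -/
def ClassF (k d : ℕ) (β : ℝ) : Set (Euc k → Euc d) :=
  {f | Set.MapsTo f (unitCube k) (unitCube d) ∧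
    Set.InjOn f (unitCube k) ∧
    Differentiable ℝ f ∧ (∀ s, Differentiable ℝ (pd s f)) ∧
    (∀ s, ∀ x ∈ unitCube k, 1/β ≤ supNorm (pd s f x) ∧ supNorm (pd s f x) ≤ β) ∧
    (∀ s t, ∀ x ∈ unitCube k, supNorm (pd t (pd s f) x) ≤ β) ∧
    (1 < k → ∀ s, ∀ x ∈ unitCube k,
      1/(2*β*((d:ℝ) - k)) ≤ subAngle (Submodule.span ℝ {pd s f x})
        (Submodule.span ℝ ((fun t => pd t f x) '' {t | t ≠ s})))}

/-- `f` interpolates `(z, w) ∈ [0,1]^d × G(k,d)`. -/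
def InterpF {k d : ℕ} (f : Euc k → Euc d) (p : Euc d × Grass k d) : Prop :=
  ∃ x ∈ unitCube k, f x = p.1 ∧ tangent f x = p.2.1

/-- `N_n^→(𝓕) = max_{f ∈ 𝓕} #{i : f interpolates (Z_i,W_i)}`. -/
def NFmax (k d : ℕ) (β : ℝ) {n : ℕ} (ω : Fin n → Euc d × Grass k d) : ℕ :=
  ⨆ f : ClassF k d β, Nat.card {i : Fin n // InterpF f.1 (ω i)}

/-- The set `𝐒` of multi-indices of total order at most `r₀`. -/
def SIdx (k r0 : ℕ) := {s : Fin k → Fin (r0+1) // (∑ i, (s i : ℕ)) ≤ r0}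

instance (k r0 : ℕ) : Fintype (SIdx k r0) := by unfold SIdx; infer_instance

/-- The multi-index in `ℕ^k` associated to an element of `𝐒`. -/
def toMulti {k r0 : ℕ} (s : SIdx k r0) : Fin k → ℕ := fun i => (s.1 i : ℕ)

/-- The uniform probability measure on `[-β,β]^n`. -/
def boxUniform (n : ℕ) (β : ℝ) : Measure (Euc n) :=
  (ENNReal.ofReal ((2*β)^n))⁻¹ • volume.restrict {y : Euc n | ∀ j, y j ∈ Set.Icc (-β) β}

open Classical in
/-- The distribution of one observation `(X, Y^𝐒)` under the null hypothesis:
uniform on `[0,1]^k × [0,1]^{d-k} × [-β,β]^{(d-k)(|𝐒|-1)}`. -/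
def obsMeasure (k d r0 : ℕ) (β : ℝ) : Measure (Euc k × (SIdx k r0 → Euc (d-k))) :=
  (cubeUniform k).prod (Measure.pi fun s : SIdx k r0 =>
    if (∀ i, s.1 i = 0) then cubeUniform (d-k) else boxUniform (d-k) β)

/-- `f` interpolates `(x, y^𝐒)`. -/
def InterpH {k d r0 : ℕ} (f : Euc k → Euc (d-k))
    (p : Euc k × (SIdx k r0 → Euc (d-k))) : Prop :=
  ∀ s : SIdx k r0, mderiv (toMulti s) f p.1 = p.2 s

/-- `N_n^{(r₀)}(𝓗) = max_{f ∈ 𝓗} #{i : f interpolates (X_i, Y_i^𝐒)}`. -/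
def NHmax (k d r0 : ℕ) (α β : ℝ) {n : ℕ}
    (ω : Fin n → Euc k × (SIdx k r0 → Euc (d-k))) : ℕ :=
  ⨆ f : Holder k (d-k) α β, Nat.card {i : Fin n // InterpH f.1 (ω i)}

/-- `w = Σ_{s=0}^{r₀} (1 - s/α) C(s+k-1, k-1)`. -/
def wconst (k r0 : ℕ) (α : ℝ) : ℝ :=
  ∑ s ∈ Finset.range (r0+1), (1 - s/α) * (Nat.choose (s+k-1) (k-1))

/-- `ρ(r₀) = k / (k + α (d-k) w)`. -/
def rho (k d r0 : ℕ) (α : ℝ) : ℝ := k / (k + α*((d:ℝ)-k)*wconst k r0 α)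

/-- Sup-norm of a function over the unit cube. -/
def funSup {k n : ℕ} (f : Euc k → Euc n) : ℝ := ⨆ x : unitCube k, supNorm (f x.1)

/-- The discrepancy `Φ` on the Hölder class. -/
def Phi {k n : ℕ} (r0 : ℕ) (α : ℝ) (f g : Euc k → Euc n) : ℝ :=
  ⨆ s : SIdx k r0, funSup (fun x => mderiv (toMulti s) f x - mderiv (toMulti s) g x) ^
    (α / (α - ∑ i, (toMulti s i : ℝ)))

/-- The discrepancy `Φ` on the values `y^𝐒`. -/
def PhiPt {k n r0 : ℕ} (α : ℝ) (y1 y2 : SIdx k r0 → Euc n) : ℝ :=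
  ⨆ s : SIdx k r0, supNorm (y1 s - y2 s) ^ (α / (α - ∑ i, (toMulti s i : ℝ)))

/-- Concatenation `ℝ^k × ℝ^{d-k} → ℝ^d`, identifying `ℝ^d` with `ℝ^k × ℝ^{d-k}`. -/
def pairFun {k d : ℕ} (h : k ≤ d) (x : Euc k) (y : Euc (d-k)) : Euc d :=
  WithLp.toLp 2 (fun j => Fin.append x y (Fin.cast (Nat.add_sub_cancel' h).symm j))

/-- `ε = ε(n)`, the solution of `ε^{-k/α} = ε^{(d-k)w} n`. -/
def epsN (k d r0 : ℕ) (α : ℝ) (n : ℕ) : ℝ :=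
  (n:ℝ) ^ (-(α / (k + α*((d:ℝ)-k)*wconst k r0 α)))

/-- The cell `I_m` of sidelength `ε'` indexed by `m`. -/
def cellI {k : ℕ} (ε' : ℝ) (m : Fin k → ℕ) : Set (Euc k) :=
  {x | ∀ i, x i ∈ Set.Ico ((m i : ℝ) * ε') (((m i : ℝ) + 1) * ε')}

open Classical in
/-- The box `R_m = I_m × [ε/2,ε]^{d-k} × Π_{𝐬 ≠ 0} [0,ε_𝐬]^{d-k}`. -/
def Rset (k d r0 : ℕ) (α : ℝ) (ε ε' : ℝ) (m : Fin k → ℕ) :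
    Set (Euc k × (SIdx k r0 → Euc (d-k))) :=
  {p | p.1 ∈ cellI ε' m ∧ ∀ s : SIdx k r0, ∀ j,
    if (∀ i, s.1 i = 0) then p.2 s j ∈ Set.Icc (ε/2) ε
    else p.2 s j ∈ Set.Icc 0 (ε ^ (1 - (∑ i, (toMulti s i : ℝ))/α))}

/-!
Since every `𝐬 ∈ 𝐒` has order `|𝐬| ≤ r₀ < α`, the condition `Φ ≤ ε` puts each `y^𝐬` in the
sup-norm cube of half-width `ε^{1-|𝐬|/α}` around `f^{(𝐬)}(x)`. Each `x`-slice of this tube is a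
product of such cubes, of measure at most `(max 2 β⁻¹ · ε^{1-|𝐬|/α})^{d-k}` under the uniform laws
on `[0,1]^{d-k}` and `[-β,β]^{d-k}`, so by Fubini the whole tube has measure at most
`c ε^{(d-k)E}` with `E = Σ_{𝐬 ∈ 𝐒} (1 - |𝐬|/α)`. Counting multi-indices of each order `s` through
`Sym (Fin k) s` gives `E ≥ w`, which settles `ε ≤ 1`; for `ε > 1` the measure is at most `1 ≤ c`.
-/

lemma abs_apply_le_supNorm {n : ℕ} (z : Euc n) (j : Fin n) : |z j| ≤ supNorm z :=
  le_ciSup (f := fun i => |z i|) (Set.finite_range _).bddAbove j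

lemma supNorm_nonneg {n : ℕ} (z : Euc n) : 0 ≤ supNorm z :=
  Real.iSup_nonneg fun _ => abs_nonneg _

lemma bddAbove_natCast_lt (α : ℝ) : BddAbove {m : ℕ | (m : ℝ) < α} :=
  ⟨⌈α⌉₊, fun _ hm => (Nat.lt_ceil.2 hm).le⟩

lemma rr_lt_self {α : ℝ} (hα : 0 < α) : (rr α : ℝ) < α :=
  Nat.sSup_mem ⟨0, by simpa using hα⟩ (bddAbove_natCast_lt α)

lemma one_le_rr {α : ℝ} (hα : 1 < α) : 1 ≤ rr α :=
  le_csSup (bddAbove_natCast_lt α) (by simpa using hα)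

lemma differentiable_of_mem_Holder {k n : ℕ} {α β : ℝ} {f : Euc k → Euc n} (hα : 1 < α)
    (hf : f ∈ Holder k n α β) : Differentiable ℝ f :=
  hf.2.1 [] (one_le_rr hα)

lemma measurable_pdIter {k n : ℕ} {f : Euc k → Euc n} (hf : Measurable f) :
    ∀ l : List (Fin k), Measurable (pdIter l f)
  | [] => hf
  | a :: l => measurable_fderiv_apply_const ℝ (pdIter l f) (EuclideanSpace.single a 1)

lemma sum_toMulti_le {k r0 : ℕ} (s : SIdx k r0) : (∑ i, (toMulti s i : ℝ)) ≤ r0 := by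
  exact_mod_cast s.2

lemma coordBox_eq_preimage {n : ℕ} (a b : Fin n → ℝ) :
    {z : Euc n | ∀ j, z j ∈ Icc (a j) (b j)} = WithLp.ofLp ⁻¹' Icc a b := by
  ext z
  simp [Pi.le_def, forall_and]

lemma measurableSet_coordBox {n : ℕ} (a b : Fin n → ℝ) :
    MeasurableSet {z : Euc n | ∀ j, z j ∈ Icc (a j) (b j)} := by
  rw [coordBox_eq_preimage]
  exact WithLp.measurable_ofLp 2 _ measurableSet_Icc

lemma volume_coordBox {n : ℕ} (a b : Fin n → ℝ) :
    volume {z : Euc n | ∀ j, z j ∈ Icc (a j) (b j)} = ∏ j, ENNReal.ofReal (b j - a j) := by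
  rw [coordBox_eq_preimage, (PiLp.volume_preserving_ofLp _).measure_preimage
    measurableSet_Icc.nullMeasurableSet, Real.volume_Icc_pi]

lemma measurableSet_unitCube (n : ℕ) : MeasurableSet (unitCube n) :=
  measurableSet_coordBox 0 1

lemma volume_unitCube (n : ℕ) : volume (unitCube n) = 1 :=
  (volume_coordBox 0 1).trans (by simp)

instance (n : ℕ) : IsProbabilityMeasure (cubeUniform n) :=
  ⟨by rw [cubeUniform, Measure.restrict_apply_univ, volume_unitCube]⟩

lemma isProbabilityMeasure_boxUniform (n : ℕ) {β : ℝ} (hβ : 0 < β) :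
    IsProbabilityMeasure (boxUniform n β) := by
  refine ⟨?_⟩
  have hvol := volume_coordBox (n := n) (fun _ => -β) (fun _ => β)
  rw [boxUniform, Measure.smul_apply, Measure.restrict_apply_univ, hvol, smul_eq_mul,
    Finset.prod_const, Finset.card_univ, Fintype.card_fin, ← ENNReal.ofReal_pow (by linarith),
    sub_neg_eq_add, ← two_mul, ENNReal.inv_mul_cancel _ ENNReal.ofReal_ne_top]
  exact (ENNReal.ofReal_pos.2 (by positivity)).ne'

def cubeAround {n : ℕ} (c : Euc n) (δ : ℝ) : Set (Euc n) :=
  {z | ∀ j, z j ∈ Icc (c j - δ) (c j + δ)}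

lemma volume_cubeAround {n : ℕ} (c : Euc n) {δ : ℝ} (hδ : 0 ≤ δ) :
    volume (cubeAround c δ) = ENNReal.ofReal ((2 * δ) ^ n) := by
  rw [cubeAround, volume_coordBox]
  simp only [add_sub_sub_cancel, ← two_mul, Finset.prod_const, Finset.card_univ,
    Fintype.card_fin]
  rw [ENNReal.ofReal_pow (by positivity)]

lemma cubeUniform_cubeAround_le {n : ℕ} (c : Euc n) {δ : ℝ} (hδ : 0 ≤ δ) :
    cubeUniform n (cubeAround c δ) ≤ ENNReal.ofReal ((2 * δ) ^ n) :=
  (Measure.restrict_le_self _).trans (volume_cubeAround c hδ).le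

lemma boxUniform_cubeAround_le {n : ℕ} {β : ℝ} (hβ : 0 < β) (c : Euc n) {δ : ℝ}
    (hδ : 0 ≤ δ) : boxUniform n β (cubeAround c δ) ≤ ENNReal.ofReal ((δ / β) ^ n) := by
  have hquot : (δ / β) ^ n = (2 * δ) ^ n / (2 * β) ^ n := by
    rw [← div_pow, mul_div_mul_left _ _ two_ne_zero]
  rw [boxUniform, Measure.smul_apply, smul_eq_mul, hquot,
    ENNReal.ofReal_div_of_pos (by positivity), ENNReal.div_eq_inv_mul, ← volume_cubeAround c hδ]
  exact mul_le_mul_right (Measure.restrict_le_self _) _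

open Classical in
def obsFactor (n : ℕ) (β : ℝ) {k r0 : ℕ} (s : SIdx k r0) : Measure (Euc n) :=
  if (∀ i, s.1 i = 0) then cubeUniform n else boxUniform n β

lemma obsMeasure_eq (k d r0 : ℕ) (β : ℝ) :
    obsMeasure k d r0 β = (cubeUniform k).prod (Measure.pi (obsFactor (d - k) β)) :=
  rfl

lemma isProbabilityMeasure_obsFactor (n : ℕ) {β : ℝ} (hβ : 0 < β) {k r0 : ℕ}
    (s : SIdx k r0) : IsProbabilityMeasure (obsFactor n β s) := by
  unfold obsFactor
  split_ifs
  · infer_instance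
  · exact isProbabilityMeasure_boxUniform n hβ

lemma obsFactor_cubeAround_le {n : ℕ} {β : ℝ} (hβ : 0 < β) {k r0 : ℕ} (s : SIdx k r0)
    (c : Euc n) {δ : ℝ} (hδ : 0 ≤ δ) :
    obsFactor n β s (cubeAround c δ) ≤ ENNReal.ofReal ((max 2 β⁻¹ * δ) ^ n) := by
  unfold obsFactor
  split_ifs
  · refine (cubeUniform_cubeAround_le c hδ).trans (ENNReal.ofReal_le_ofReal ?_)
    gcongr
    exact le_max_left _ _
  · refine (boxUniform_cubeAround_le hβ c hδ).trans (ENNReal.ofReal_le_ofReal ?_)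
    rw [div_eq_inv_mul]
    gcongr
    exact le_max_right _ _

lemma isProbabilityMeasure_obsMeasure (k d r0 : ℕ) {β : ℝ} (hβ : 0 < β) :
    IsProbabilityMeasure (obsMeasure k d r0 β) := by
  have := isProbabilityMeasure_obsFactor (d - k) hβ (k := k) (r0 := r0)
  rw [obsMeasure_eq]
  infer_instance

lemma MeasureTheory.Measure.prod_apply_le_of_forall_le {X Y : Type*} [MeasurableSpace X]
    [MeasurableSpace Y] {μ : Measure X} [IsProbabilityMeasure μ] {ν : Measure Y}
    {A : Set (X × Y)} (hA : MeasurableSet A) {M : ENNReal}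
    (h : ∀ x, ν (Prod.mk x ⁻¹' A) ≤ M) : μ.prod ν A ≤ M :=
  calc μ.prod ν A ≤ ∫⁻ x, ν (Prod.mk x ⁻¹' A) ∂μ := Measure.prod_apply_le hA
    _ ≤ ∫⁻ _, M ∂μ := lintegral_mono h
    _ = M := by simp

lemma supNorm_le_of_phiPt_le {k n r0 : ℕ} {α ε : ℝ} (hα : 0 < α) {y1 y2 : SIdx k r0 → Euc n}
    (h : PhiPt α y1 y2 ≤ ε) {s : SIdx k r0} (hs : (∑ i, (toMulti s i : ℝ)) < α) :
    supNorm (y1 s - y2 s) ≤ ε ^ (1 - (∑ i, (toMulti s i : ℝ)) / α) := by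
  set m := ∑ i, (toMulti s i : ℝ)
  have hp : 0 < α / (α - m) := div_pos hα (by linarith)
  have hterm : supNorm (y1 s - y2 s) ^ (α / (α - m)) ≤ ε :=
    (le_ciSup (f := fun s : SIdx k r0 =>
      supNorm (y1 s - y2 s) ^ (α / (α - ∑ i, (toMulti s i : ℝ))))
      (Set.finite_range _).bddAbove s).trans h
  have hexp : (α / (α - m))⁻¹ = 1 - m / α := by
    rw [inv_div, one_sub_div hα.ne']
  rw [← hexp, ← Real.rpow_rpow_inv (supNorm_nonneg (y1 s - y2 s)) hp.ne']
  exact Real.rpow_le_rpow (Real.rpow_nonneg (supNorm_nonneg _) _) hterm (inv_nonneg.2 hp.le)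

def graphTube {k n r0 : ℕ} (g : SIdx k r0 → Euc k → Euc n) (δ : SIdx k r0 → ℝ) :
    Set (Euc k × (SIdx k r0 → Euc n)) :=
  {p | p.1 ∈ unitCube k ∧ ∀ s, p.2 s ∈ cubeAround (g s p.1) (δ s)}

lemma measurableSet_graphTube {k n r0 : ℕ} {g : SIdx k r0 → Euc k → Euc n}
    (hg : ∀ s, Measurable (g s)) (δ : SIdx k r0 → ℝ) : MeasurableSet (graphTube g δ) := by
  have hcoord : ∀ s j, Measurable fun p : Euc k × (SIdx k r0 → Euc n) => p.2 s j := by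
    intro s j; fun_prop
  have hgraph : ∀ s j, Measurable fun p : Euc k × (SIdx k r0 → Euc n) => g s p.1 j := by
    intro s j; fun_prop
  have hset : graphTube g δ = Prod.fst ⁻¹' unitCube k ∩ ⋂ s, ⋂ j,
      {p : Euc k × (SIdx k r0 → Euc n) | g s p.1 j - δ s ≤ p.2 s j} ∩
        {p | p.2 s j ≤ g s p.1 j + δ s} := by
    ext p
    simp [graphTube, cubeAround]
  rw [hset]
  exact (measurable_fst (measurableSet_unitCube k)).inter <| .iInter fun s => .iInter fun j =>
    (measurableSet_le ((hgraph s j).sub_const _) (hcoord s j)).inter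
      (measurableSet_le (hcoord s j) ((hgraph s j).add_const _))

lemma obsMeasure_graphTube_le {k d r0 : ℕ} {β : ℝ} (hβ : 0 < β)
    {g : SIdx k r0 → Euc k → Euc (d - k)} (hg : ∀ s, Measurable (g s))
    {δ : SIdx k r0 → ℝ} (hδ : ∀ s, 0 ≤ δ s) :
    obsMeasure k d r0 β (graphTube g δ) ≤
      ∏ s, ENNReal.ofReal ((max 2 β⁻¹ * δ s) ^ (d - k)) := by
  have := isProbabilityMeasure_obsFactor (d - k) hβ (k := k) (r0 := r0)
  rw [obsMeasure_eq]
  refine Measure.prod_apply_le_of_forall_le (measurableSet_graphTube hg δ) fun x => ?_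
  by_cases hx : x ∈ unitCube k
  · have hslice : Prod.mk x ⁻¹' graphTube g δ = Set.univ.pi fun s => cubeAround (g s x) (δ s) := by
      ext y
      simp [graphTube, hx]
    rw [hslice, Measure.pi_pi]
    exact Finset.prod_le_prod' fun s _ => obsFactor_cubeAround_le hβ s _ (hδ s)
  · have hslice : Prod.mk x ⁻¹' graphTube g δ = ∅ := by
      ext y
      simp [graphTube, hx]
    simp [hslice]

lemma choose_le_card_sum_toMulti_eq {k r0 m : ℕ} (hk : 1 ≤ k) (hm : m ≤ r0) :
    (m + k - 1).choose (k - 1) ≤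
      (Finset.univ.filter fun s : SIdx k r0 => ∑ i, toMulti s i = m).card := by
  have hchoose : (m + k - 1).choose (k - 1) = Fintype.card (Sym (Fin k) m) := by
    obtain ⟨k, rfl⟩ : ∃ k', k = k' + 1 := ⟨k - 1, by omega⟩
    rw [Sym.card_sym_eq_choose, Fintype.card_fin, show m + (k + 1) - 1 = k + m by omega,
      show k + 1 + m - 1 = k + m by omega, Nat.add_sub_cancel, Nat.choose_symm_add]
  let count := Sym.equivNatSumOfFintype (Fin k) m
  have hle : ∀ σ i, (count σ).1 i < r0 + 1 := fun σ i =>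
    Nat.lt_succ_of_le ((Finset.single_le_sum (fun _ _ => Nat.zero_le _) (Finset.mem_univ i)).trans
      ((count σ).2.le.trans hm))
  let embed : Sym (Fin k) m → {s : SIdx k r0 // ∑ i, toMulti s i = m} :=
    fun σ => ⟨⟨fun i => ⟨(count σ).1 i, hle σ i⟩, (count σ).2.le.trans hm⟩, (count σ).2⟩
  have hembed : Function.Injective embed := fun σ τ hστ => count.injective <|
    Subtype.ext <| funext fun i =>
      congrArg (fun s : {s : SIdx k r0 // ∑ i, toMulti s i = m} => toMulti s.1 i) hστ
  rw [hchoose, ← Fintype.card_subtype]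
  exact Fintype.card_le_of_injective embed hembed

lemma one_sub_natCast_div_nonneg {m r0 : ℕ} {α : ℝ} (hm : m ≤ r0) (hα : (r0 : ℝ) < α) :
    0 ≤ 1 - (m : ℝ) / α := by
  rw [sub_nonneg, div_le_one ((Nat.cast_nonneg r0).trans_lt hα)]
  exact (Nat.cast_le.2 hm).trans hα.le

lemma wconst_nonneg {k r0 : ℕ} {α : ℝ} (hα : (r0 : ℝ) < α) : 0 ≤ wconst k r0 α :=
  Finset.sum_nonneg fun _ hm => mul_nonneg
    (one_sub_natCast_div_nonneg (Nat.lt_succ_iff.1 (Finset.mem_range.1 hm)) hα) (Nat.cast_nonneg _)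

lemma wconst_le_sum_SIdx {k r0 : ℕ} (hk : 1 ≤ k) {α : ℝ} (hα : (r0 : ℝ) < α) :
    wconst k r0 α ≤ ∑ s : SIdx k r0, (1 - (∑ i, (toMulti s i : ℝ)) / α) := by
  have hmaps : ∀ s ∈ (Finset.univ : Finset (SIdx k r0)),
      ∑ i, toMulti s i ∈ Finset.range (r0 + 1) := fun s _ =>
    Finset.mem_range.2 (Nat.lt_succ_of_le s.2)
  rw [← Finset.sum_fiberwise_of_maps_to hmaps, wconst]
  refine Finset.sum_le_sum fun m hm => ?_
  have hm : m ≤ r0 := Nat.lt_succ_iff.1 (Finset.mem_range.1 hm)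
  have hfiber : ∀ s ∈ Finset.univ.filter fun s : SIdx k r0 => ∑ i, toMulti s i = m,
      1 - (∑ i, (toMulti s i : ℝ)) / α = 1 - m / α := fun s hs => by
    rw [← (Finset.mem_filter.1 hs).2, Nat.cast_sum]
  rw [Finset.sum_congr rfl hfiber, Finset.sum_const, nsmul_eq_mul']
  have hcard := choose_le_card_sum_toMulti_eq (r0 := r0) hk hm
  exact mul_le_mul_of_nonneg_left (by exact_mod_cast hcard)
    (one_sub_natCast_div_nonneg hm hα)

lemma prod_mul_rpow_pow {ι : Type*} (t : Finset ι) (C : ℝ) {ε : ℝ} (hε : 0 < ε) (e : ι → ℝ)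
    (n : ℕ) : ∏ i ∈ t, (C * ε ^ e i) ^ n = C ^ (n * t.card) * ε ^ ((n : ℝ) * ∑ i ∈ t, e i) := by
  rw [Finset.prod_pow, Finset.prod_mul_distrib, Finset.prod_const, ← Real.rpow_sum_of_pos hε,
    mul_pow, ← pow_mul, mul_comm n, mul_comm (n : ℝ), Real.rpow_mul hε.le, Real.rpow_natCast]

lemma obsMeasure_phiPt_le {k d r0 : ℕ} {α β ε : ℝ} (hα : 1 < α) (hβ : 0 < β)
    (hr0 : (r0 : ℝ) < α) {f : Euc k → Euc (d - k)} (hf : f ∈ Holder k (d - k) α β)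
    (hε : 0 < ε) :
    obsMeasure k d r0 β
        {p | p.1 ∈ unitCube k ∧ PhiPt α p.2 (fun s => mderiv (toMulti s) f p.1) ≤ ε} ≤
      ENNReal.ofReal (max 2 β⁻¹ ^ ((d - k) * Fintype.card (SIdx k r0)) *
        ε ^ (((d - k : ℕ) : ℝ) * ∑ s : SIdx k r0, (1 - (∑ i, (toMulti s i : ℝ)) / α))) := by
  set δ : SIdx k r0 → ℝ := fun s => ε ^ (1 - (∑ i, (toMulti s i : ℝ)) / α)
  have hsub : {p | p.1 ∈ unitCube k ∧ PhiPt α p.2 (fun s => mderiv (toMulti s) f p.1) ≤ ε} ⊆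
      graphTube (fun s => mderiv (toMulti s) f) δ := by
    rintro p ⟨hp, hΦ⟩
    refine ⟨hp, fun s j => ?_⟩
    have hcoord := (abs_apply_le_supNorm _ j).trans
      (supNorm_le_of_phiPt_le (by linarith) hΦ ((sum_toMulti_le s).trans_lt hr0))
    rw [PiLp.sub_apply, abs_sub_le_iff] at hcoord
    constructor <;> linarith [hcoord.1, hcoord.2]
  have hg : ∀ s : SIdx k r0, Measurable (mderiv (toMulti s) f) := fun s =>
    measurable_pdIter (differentiable_of_mem_Holder hα hf).continuous.measurable _
  calc _ ≤ obsMeasure k d r0 β (graphTube (fun s => mderiv (toMulti s) f) δ) := measure_mono hsub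
    _ ≤ ∏ s, ENNReal.ofReal ((max 2 β⁻¹ * δ s) ^ (d - k)) :=
      obsMeasure_graphTube_le hβ hg fun s => (Real.rpow_pos_of_pos hε _).le
    _ = _ := by
      rw [← ENNReal.ofReal_prod_of_nonneg fun s _ => by positivity, prod_mul_rpow_pow _ _ hε,
        Finset.card_univ]

lemma le_ofReal_mul_rpow {x : ENNReal} {C ε a b : ℝ} (hC : 1 ≤ C) (hε : 0 < ε) (ha : 0 ≤ a)
    (hab : a ≤ b) (hx : x ≤ 1) (hxb : x ≤ ENNReal.ofReal (C * ε ^ b)) :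
    x ≤ ENNReal.ofReal (C * ε ^ a) := by
  rcases le_or_gt ε 1 with hε1 | hε1
  · exact hxb.trans <| ENNReal.ofReal_le_ofReal <|
      mul_le_mul_of_nonneg_left (Real.rpow_le_rpow_of_exponent_ge hε hε1 hab) (by linarith)
  · refine hx.trans ?_
    rw [← ENNReal.ofReal_one]
    exact ENNReal.ofReal_le_ofReal (one_le_mul_of_one_le_of_one_le hC (Real.one_le_rpow hε1.le ha))

theorem graphS_measure_general (k d : ℕ) (hk : 1 ≤ k) (hkd : k < d) (α β : ℝ)
    (hα : 1 < α) (hβ : 0 < β) (r0 : ℕ) (hr0 : r0 ≤ rr α) :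
    ∃ c2 : ℝ, 0 < c2 ∧ ∀ f ∈ Holder k (d-k) α β, ∀ ε : ℝ, 0 < ε →
      obsMeasure k d r0 β
          {p | p.1 ∈ unitCube k ∧ PhiPt α p.2 (fun s => mderiv (toMulti s) f p.1) ≤ ε}
        ≤ ENNReal.ofReal (c2 * ε ^ (((d:ℝ)-k) * wconst k r0 α)) := by
  have hr0α : (r0 : ℝ) < α := (Nat.cast_le.2 hr0).trans_lt (rr_lt_self (by linarith))
  have hdk : (d : ℝ) - k = ((d - k : ℕ) : ℝ) := (Nat.cast_sub hkd.le).symm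
  have := isProbabilityMeasure_obsMeasure k d r0 hβ
  refine ⟨max 2 β⁻¹ ^ ((d - k) * Fintype.card (SIdx k r0)), by positivity, fun f hf ε hε => ?_⟩
  rw [hdk]
  exact le_ofReal_mul_rpow (one_le_pow₀ (le_max_of_le_left one_le_two)) hε
    (mul_nonneg (Nat.cast_nonneg _) (wconst_nonneg hr0α))
    (mul_le_mul_of_nonneg_left (wconst_le_sum_SIdx hk hr0α) (Nat.cast_nonneg _))
    prob_le_one (obsMeasure_phiPt_le hα hβ hr0α hf hε)

/-- **Lemma 2 (measure of a `Φ`-neighborhood of a graph).** There is `c₂ > 0` such that for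
all `f ∈ 𝓗` and all `ε > 0`, `μ(graph^𝐒(f)^{ε,Φ}) ≤ c₂ ε^{(d-k)w}`. -/
theorem graphS_measure (k d : ℕ) (hk : 1 ≤ k) (hkd : k < d) (α β : ℝ)
    (hα : 1 < α) (hβ : 0 < β) (r0 : ℕ) (hr01 : 1 ≤ r0) (hr0 : r0 ≤ rr α) :
    ∃ c2 : ℝ, 0 < c2 ∧ ∀ f ∈ Holder k (d-k) α β, ∀ ε : ℝ, 0 < ε →
      obsMeasure k d r0 β
          {p | p.1 ∈ unitCube k ∧ PhiPt α p.2 (fun s => mderiv (toMulti s) f p.1) ≤ ε}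
        ≤ ENNReal.ofReal (c2 * ε ^ (((d:ℝ)-k) * wconst k r0 α)) :=
  graphS_measure_general k d hk hkd α β hα hβ r0 hr0
end
end

section
/- There is a constant c = c(k,d) > 0 such that for all sufficiently small ε > 0, ν([0,ε]^{(d−k)k}) > c ε^{(d−k)k}, where ν is the probability measure on ℝ^{(d−k)k} induced from an O(d)-invariant probability measure λ on G(k,d) by the map κ. -/
open MeasureTheory Filter Set
open scoped RealInnerProductSpace

noncomputable section

/-! By `O(d)`-invariance, no ball of radius `ε/16k` has more `ν`-mass than the cube
`[0,ε]^{(d-k)k}`. Indeed, let `σ` be an isometry carrying the graph of the centre `y₀` to the graph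
of the constant `c ≡ ε/2`. The graph of any `Y` in the ball is a small perturbation of the graph of
`y₀`, so `σ` carries it to the graph of some `Y'` within `ε/2` of `c`, that is, into the cube.
Since a ball of `ν`-mass `> 1/2` is covered by `O(ε^{-(d-k)k})` balls of radius `ε/16k`, the cube
has mass at least a constant times `ε^{(d-k)k}`. -/

section LinearCombination

variable {k : ℕ} {E : Type*} [SeminormedAddCommGroup E] [NormedSpace ℝ E]

def eucLinComb (Y : Fin k → E) : Euc k →ₗ[ℝ] E :=
  Fintype.linearCombination ℝ Y ∘ₗ (WithLp.linearEquiv 2 ℝ (Fin k → ℝ)).toLinearMap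

lemma eucLinComb_apply (Y : Fin k → E) (x : Euc k) : eucLinComb Y x = ∑ s, x s • Y s :=
  Fintype.linearCombination_apply ℝ Y x.ofLp

lemma eucLinComb_single (Y : Fin k → E) (s : Fin k) :
    eucLinComb Y (EuclideanSpace.single s 1) = Y s := by
  simp [eucLinComb_apply]

lemma eucLinComb_sub (Y Y' : Fin k → E) (x : Euc k) :
    eucLinComb (Y - Y') x = eucLinComb Y x - eucLinComb Y' x := by
  simp [eucLinComb_apply, smul_sub]

lemma norm_eucLinComb_le (Y : Fin k → E) (x : Euc k) : ‖eucLinComb Y x‖ ≤ k * ‖x‖ * ‖Y‖ := by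
  rw [eucLinComb_apply]
  calc ‖∑ s, x s • Y s‖ ≤ ∑ s, ‖x s‖ * ‖Y s‖ := norm_sum_le_of_le _ fun s _ => norm_smul_le _ _
    _ ≤ ∑ _s : Fin k, ‖x‖ * ‖Y‖ := by
      gcongr with s
      exacts [PiLp.norm_apply_le x s, norm_le_pi_norm Y s]
    _ = k * ‖x‖ * ‖Y‖ := by simp [mul_assoc]

lemma norm_snd_sub_le_of_fst_eq (c : Fin k → E) {u : Euc k} {p : WithLp 2 (Euc k × E)} {s : Fin k}
    (hs : (WithLp.toLp 2 (u, eucLinComb c u) + p).fst = EuclideanSpace.single s 1) :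
    ‖(WithLp.toLp 2 (u, eucLinComb c u) + p).snd - c s‖ ≤ (1 + k * ‖c‖) * ‖p‖ := by
  simp only [WithLp.add_fst, WithLp.toLp_fst, WithLp.add_snd, WithLp.toLp_snd] at hs ⊢
  rw [eq_sub_of_add_eq hs, map_sub, eucLinComb_single,
    show c s - eucLinComb c p.fst + p.snd - c s = p.snd - eucLinComb c p.fst by abel]
  grw [norm_sub_le, norm_eucLinComb_le, WithLp.norm_fst_le, WithLp.norm_snd_le]
  linarith

end LinearCombination

lemma norm_le_mul_of_forall_abs_le {n : ℕ} (v : Euc n) {a : ℝ} (ha : 0 ≤ a)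
    (hv : ∀ j, |v j| ≤ a) : ‖v‖ ≤ n * a := by
  refine le_of_sq_le_sq ?_ (by positivity)
  calc ‖v‖ ^ 2 = ∑ j, |v j| ^ 2 := by simp [EuclideanSpace.real_norm_sq_eq]
    _ ≤ ∑ _j : Fin n, a ^ 2 := by gcongr with j; exact hv j
    _ = n * a ^ 2 := by simp
    _ ≤ (n * a) ^ 2 := by
      rw [mul_pow]
      gcongr
      exact_mod_cast Nat.le_self_pow two_ne_zero n

section Graph

variable {k d : ℕ} (h : k ≤ d)

def splitEquiv : Euc d ≃ₗᵢ[ℝ] WithLp 2 (Euc k × Euc (d - k)) :=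
  (LinearIsometryEquiv.piLpCongrLeft 2 ℝ ℝ (finCongr (Nat.add_sub_cancel' h).symm)).trans <|
    (LinearIsometryEquiv.piLpCongrLeft 2 ℝ ℝ finSumFinEquiv.symm).trans <|
      PiLp.sumPiLpEquivProdLpPiLp 2 fun _ => ℝ

lemma splitEquiv_symm_toLp (x : Euc k) (y : Euc (d - k)) :
    (splitEquiv h).symm (WithLp.toLp 2 (x, y)) = pairFun h x y := by
  ext i
  obtain ⟨j, rfl⟩ := (finCongr (Nat.add_sub_cancel' h)).surjective i
  induction j using Fin.addCases <;>
    simp [splitEquiv, pairFun, PiLp.sumPiLpEquivProdLpPiLp] <;> rfl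

lemma splitEquiv_pairFun (x : Euc k) (y : Euc (d - k)) :
    splitEquiv h (pairFun h x y) = WithLp.toLp 2 (x, y) := by
  rw [← splitEquiv_symm_toLp, LinearIsometryEquiv.apply_symm_apply]

def graphY (Y : Fin k → Euc (d - k)) : Submodule ℝ (Euc d) :=
  Submodule.span ℝ (Set.range fun s : Fin k => pairFun h (EuclideanSpace.single s 1) (Y s))

def graphMap (Y : Fin k → Euc (d - k)) : Euc k →ₗ[ℝ] Euc d :=
  (splitEquiv h).symm.toLinearEquiv.toLinearMap ∘ₗ
    (WithLp.linearEquiv 2 ℝ (Euc k × Euc (d - k))).symm.toLinearMap ∘ₗ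
      LinearMap.id.prod (eucLinComb Y)

lemma splitEquiv_graphMap (Y : Fin k → Euc (d - k)) (x : Euc k) :
    splitEquiv h (graphMap h Y x) = WithLp.toLp 2 (x, eucLinComb Y x) :=
  (splitEquiv h).apply_symm_apply _

lemma graphMap_single (Y : Fin k → Euc (d - k)) (s : Fin k) :
    graphMap h Y (EuclideanSpace.single s 1) = pairFun h (EuclideanSpace.single s 1) (Y s) := by
  apply (splitEquiv h).injective
  rw [splitEquiv_graphMap, splitEquiv_pairFun, eucLinComb_single]

lemma range_graphMap (Y : Fin k → Euc (d - k)) : LinearMap.range (graphMap h Y) = graphY h Y := by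
  rw [LinearMap.range_eq_map, ← (EuclideanSpace.basisFun (Fin k) ℝ).toBasis.span_eq,
    Submodule.map_span, ← Set.range_comp]
  simp [graphY, Function.comp_def, graphMap_single]

lemma graphMap_injective (Y : Fin k → Euc (d - k)) : Function.Injective (graphMap h Y) := by
  intro x x' hxx'
  simpa [splitEquiv_graphMap] using congrArg (fun v => (splitEquiv h v).fst) hxx'

lemma finrank_graphY (Y : Fin k → Euc (d - k)) : Module.finrank ℝ (graphY h Y) = k := by
  rw [← range_graphMap, LinearMap.finrank_range_of_inj (graphMap_injective h Y),
    finrank_euclideanSpace_fin]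

lemma eq_graphMap_fst_of_mem_graphY {Y : Fin k → Euc (d - k)} {v : Euc d} (hv : v ∈ graphY h Y) :
    v = graphMap h Y (splitEquiv h v).fst := by
  obtain ⟨x, rfl⟩ := (range_graphMap h Y).symm ▸ hv
  rw [splitEquiv_graphMap]
  rfl

lemma graphY_injective : Function.Injective (graphY (k := k) h) := by
  intro Y Y' hYY'
  funext s
  have hmem : pairFun h (EuclideanSpace.single s 1) (Y s) ∈ graphY h Y' :=
    hYY' ▸ Submodule.subset_span (Set.mem_range_self s)
  have := congrArg (fun v => (splitEquiv h v).snd) (eq_graphMap_fst_of_mem_graphY h hmem)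
  simpa [splitEquiv_pairFun, splitEquiv_graphMap, eucLinComb_single] using this

lemma norm_le_norm_graphMap (Y : Fin k → Euc (d - k)) (x : Euc k) : ‖x‖ ≤ ‖graphMap h Y x‖ := by
  rw [← (splitEquiv h).norm_map, splitEquiv_graphMap]
  simpa using WithLp.norm_fst_le (Euc k) (WithLp.toLp 2 (x, eucLinComb Y x))

lemma norm_graphMap_le (Y : Fin k → Euc (d - k)) (x : Euc k) :
    ‖graphMap h Y x‖ ≤ (1 + k * ‖Y‖) * ‖x‖ := by
  rw [← (splitEquiv h).norm_map, splitEquiv_graphMap]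
  calc ‖WithLp.toLp 2 (x, eucLinComb Y x)‖
        = ‖WithLp.toLp 2 (x, (0 : Euc (d - k))) + WithLp.toLp 2 (0, eucLinComb Y x)‖ := by
          rw [← WithLp.toLp_add, Prod.mk_add_mk, add_zero, zero_add]
    _ ≤ ‖x‖ + ‖eucLinComb Y x‖ := by
      grw [norm_add_le, WithLp.norm_toLp_fst, WithLp.norm_toLp_snd]
    _ ≤ (1 + k * ‖Y‖) * ‖x‖ := by nlinarith [norm_eucLinComb_le Y x]

lemma norm_graphMap_sub_graphMap_le (Y Y' : Fin k → Euc (d - k)) (x : Euc k) :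
    ‖graphMap h Y x - graphMap h Y' x‖ ≤ k * ‖x‖ * ‖Y - Y'‖ := by
  rw [← (splitEquiv h).norm_map, map_sub, splitEquiv_graphMap, splitEquiv_graphMap, ← WithLp.toLp_sub,
    Prod.mk_sub_mk, sub_self, ← eucLinComb_sub, WithLp.norm_toLp_snd]
  exact norm_eucLinComb_le _ _

lemma exists_range_eq_graphY (L : Euc k →ₗ[ℝ] Euc d) {C : ℝ}
    (hL : ∀ x, ‖x‖ ≤ C * ‖(splitEquiv h (L x)).fst‖) :
    ∃ z : Fin k → Euc k, (∀ s, ‖z s‖ ≤ C) ∧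
      (∀ s, (splitEquiv h (L (z s))).fst = EuclideanSpace.single s 1) ∧
      LinearMap.range L = graphY h fun s => (splitEquiv h (L (z s))).snd := by
  let T : Euc k →ₗ[ℝ] Euc k := WithLp.fstₗ 2 ℝ _ _ ∘ₗ (splitEquiv h).toLinearEquiv.toLinearMap ∘ₗ L
  have hT : Function.Injective T := (injective_iff_map_eq_zero T).2 fun x hx => by
    have hx' : (splitEquiv h (L x)).fst = 0 := hx
    simpa [hx'] using hL x
  choose z hz using fun s => LinearMap.injective_iff_surjective.1 hT (EuclideanSpace.single s 1)
  have hz' : ∀ s, (splitEquiv h (L (z s))).fst = EuclideanSpace.single s 1 := hz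
  refine ⟨z, fun s => by simpa [hz' s] using hL (z s), hz', ?_⟩
  symm
  refine Submodule.eq_of_le_of_finrank_eq (Submodule.span_le.2 ?_) ?_
  · rintro _ ⟨s, rfl⟩
    refine ⟨z s, (splitEquiv h).injective ?_⟩
    rw [splitEquiv_pairFun, ← hz' s]
    rfl
  · have hLinj : Function.Injective L := fun x x' hxx' => hT (by simp [T, hxx'])
    rw [finrank_graphY, LinearMap.finrank_range_of_inj hLinj, finrank_euclideanSpace_fin]

lemma exists_map_graphY_eq_graphY_near (σ : Euc d ≃ₗᵢ[ℝ] Euc d) {y₀ c Y : Fin k → Euc (d - k)}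
    {r : ℝ} (hσ : (graphY h y₀).map (σ.toLinearEquiv : Euc d →ₗ[ℝ] Euc d) = graphY h c)
    (hc : k * ‖c‖ ≤ 1) (hY : ‖Y - y₀‖ ≤ r) (hr : k * r ≤ 1 / 4) :
    ∃ Y', (graphY h Y).map (σ.toLinearEquiv : Euc d →ₗ[ℝ] Euc d) = graphY h Y' ∧
      ‖Y' - c‖ ≤ 8 * k * r := by
  set L : Euc k →ₗ[ℝ] Euc d := (σ.toLinearEquiv : Euc d →ₗ[ℝ] Euc d) ∘ₗ graphMap h Y
  -- `L` is the perturbation by `e` of `σ ∘ graphMap y₀`, whose image is `graphY c`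
  set T₀ : Euc k → Euc k := fun x => (splitEquiv h (σ (graphMap h y₀ x))).fst
  set e : Euc k → WithLp 2 (Euc k × Euc (d - k)) :=
    fun x => splitEquiv h (σ (graphMap h Y x) - σ (graphMap h y₀ x))
  have hL₀ : ∀ x, σ (graphMap h y₀ x) = graphMap h c (T₀ x) := fun x =>
    eq_graphMap_fst_of_mem_graphY h <|
      hσ ▸ Submodule.mem_map_of_mem (range_graphMap h y₀ ▸ LinearMap.mem_range_self _ x)
  have hsplit : ∀ x, splitEquiv h (L x) = WithLp.toLp 2 (T₀ x, eucLinComb c (T₀ x)) + e x := by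
    intro x
    rw [← splitEquiv_graphMap h c, ← hL₀, ← map_add]
    simp [L]
  have he : ∀ x, ‖e x‖ ≤ k * r * ‖x‖ := by
    intro x
    rw [LinearIsometryEquiv.norm_map, ← map_sub, LinearIsometryEquiv.norm_map]
    grw [norm_graphMap_sub_graphMap_le, hY]
    linarith
  have hT₀ : ∀ x, ‖x‖ ≤ 2 * ‖T₀ x‖ := by
    intro x
    calc ‖x‖ ≤ ‖σ (graphMap h y₀ x)‖ := by
          rw [LinearIsometryEquiv.norm_map]; exact norm_le_norm_graphMap h y₀ x
      _ ≤ (1 + k * ‖c‖) * ‖T₀ x‖ := hL₀ x ▸ norm_graphMap_le h c (T₀ x)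
      _ ≤ 2 * ‖T₀ x‖ := by gcongr; linarith
  have hT : ∀ x, ‖x‖ ≤ 4 * ‖(splitEquiv h (L x)).fst‖ := by
    intro x
    have : ‖T₀ x‖ ≤ ‖(splitEquiv h (L x)).fst‖ + k * r * ‖x‖ := by
      have hfst := congrArg WithLp.fst (hsplit x)
      simp only [WithLp.add_fst, WithLp.toLp_fst] at hfst
      rw [eq_sub_of_add_eq hfst.symm]
      grw [norm_sub_le, WithLp.norm_fst_le _ (e x), he]
    nlinarith [hT₀ x, norm_nonneg x]
  obtain ⟨z, hz4, hz, hrange⟩ := exists_range_eq_graphY h L hT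
  refine ⟨fun s => (splitEquiv h (L (z s))).snd,
    by rw [← range_graphMap h Y, ← LinearMap.range_comp, hrange], ?_⟩
  have hr0 : 0 ≤ r := (norm_nonneg _).trans hY
  refine (pi_norm_le_iff_of_nonneg (by positivity)).2 fun s => ?_
  rw [Pi.sub_apply]
  calc ‖(splitEquiv h (L (z s))).snd - c s‖ ≤ (1 + k * ‖c‖) * ‖e (z s)‖ := by
        have hzs := hz s
        rw [hsplit] at hzs ⊢
        exact norm_snd_sub_le_of_fst_eq c hzs
    _ ≤ 2 * (k * r * 4) := by
        grw [he, hz4]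
        gcongr
        linarith
    _ = 8 * k * r := by ring

end Graph

lemma exists_linearIsometryEquiv_map_eq {V : Type*} [NormedAddCommGroup V] [InnerProductSpace ℝ V]
    [FiniteDimensional ℝ V] {S T : Submodule ℝ V}
    (hST : Module.finrank ℝ S = Module.finrank ℝ T) :
    ∃ σ : V ≃ₗᵢ[ℝ] V, S.map (σ.toLinearEquiv : V →ₗ[ℝ] V) = T := by
  let e : S ≃ₗᵢ[ℝ] T :=
    ((stdOrthonormalBasis ℝ S).reindex (finCongr hST)).repr.trans (stdOrthonormalBasis ℝ T).repr.symm
  let L : S →ₗᵢ[ℝ] V := T.subtypeₗᵢ.comp e.toLinearIsometry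
  refine ⟨L.extend.toLinearIsometryEquiv rfl, Submodule.eq_of_le_of_finrank_eq ?_ ?_⟩
  · rintro _ ⟨w, hw, rfl⟩
    exact (L.extend_apply ⟨w, hw⟩).symm ▸ (e ⟨w, hw⟩).2
  · rw [LinearEquiv.finrank_map_eq, hST]

section Invariance

variable {k d : ℕ} {lam : Measure (Grass k d)}

lemma IsOrthInvariant.ae_rotGrass (hinv : IsOrthInvariant lam) (Q : Euc d ≃ₗᵢ[ℝ] Euc d)
    {P : Grass k d → Prop} (hP : ∀ᵐ W ∂lam, P W) : ∀ᵐ W ∂lam, P (rotGrass Q W) := by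
  rw [ae_iff] at hP ⊢
  refine measure_mono_null (Set.preimage_mono (subset_toMeasurable lam {W | ¬P W})) ?_
  rw [hinv Q _ (measurableSet_toMeasurable _ _), measure_toMeasurable, hP]

lemma map_apply_le_of_rotGrass (h : k ≤ d) (hinv : IsOrthInvariant lam)
    {κ : Grass k d → (Fin k → Euc (d - k))} (hκmeas : Measurable κ)
    (hκ : ∀ᵐ W ∂lam, W.1 = graphY h (κ W)) (Q : Euc d ≃ₗᵢ[ℝ] Euc d)
    {B T : Set (Fin k → Euc (d - k))} (hB : MeasurableSet B) (hT : MeasurableSet T)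
    (hBT : ∀ Y ∈ B, ∃ Y' ∈ T,
      (graphY h Y).map (Q.toLinearEquiv : Euc d →ₗ[ℝ] Euc d) = graphY h Y') :
    lam.map κ B ≤ lam.map κ T := by
  rw [Measure.map_apply hκmeas hB, Measure.map_apply hκmeas hT, ← hinv Q _ (hκmeas hT)]
  refine measure_mono_ae ?_
  filter_upwards [hκ, hinv.ae_rotGrass Q hκ] with W hW hQW hWB
  obtain ⟨Y', hY'T, hY'⟩ := hBT (κ W) hWB
  have hκQW : κ (rotGrass Q W) = Y' :=
    graphY_injective h (hQW.symm.trans (by rw [← hY', ← hW]; rfl))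
  show κ (rotGrass Q W) ∈ T
  rwa [hκQW]

end Invariance

section Cube

variable {k n : ℕ}

lemma measurableSet_cube (ε : ℝ) :
    MeasurableSet {y : Fin k → Euc n | ∀ s j, y s j ∈ Set.Icc (0 : ℝ) ε} := by
  simp only [Set.ofPred_forall]
  exact (isClosed_iInter fun s => isClosed_iInter fun j =>
    isClosed_Icc.preimage (by fun_prop)).measurableSet

lemma mem_cube_of_mem_closedBall {ε : ℝ} {y : Fin k → Euc n}
    (hy : y ∈ Metric.closedBall (fun _ => WithLp.toLp 2 fun _ => ε / 2) (ε / 2)) :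
    ∀ s j, y s j ∈ Set.Icc (0 : ℝ) ε := by
  intro s j
  set c : Fin k → Euc n := fun _ => WithLp.toLp 2 fun _ => ε / 2
  have hsj : |y s j - ε / 2| ≤ ε / 2 :=
    calc |y s j - ε / 2| = ‖(y - c) s j‖ := by simp [c]
      _ ≤ ‖y - c‖ := (PiLp.norm_apply_le _ j).trans (norm_le_pi_norm _ s)
      _ ≤ ε / 2 := by rwa [← dist_eq_norm]
  constructor <;> linarith [abs_le.1 hsj]

end Cube

lemma exists_abs_sub_grid_le {M δ t : ℝ} (hδ : 0 < δ) (ht : |t| ≤ M) :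
    ∃ m : Fin (⌈2 * M / δ⌉₊ + 1), |t - (-M + δ * m)| ≤ δ := by
  obtain ⟨htM, htM'⟩ := abs_le.1 ht
  have h0 : 0 ≤ (t + M) / δ := div_nonneg (by linarith) hδ.le
  have hm : ⌊(t + M) / δ⌋₊ < ⌈2 * M / δ⌉₊ + 1 :=
    Nat.lt_succ_of_le ((Nat.floor_le_floor (by gcongr; linarith)).trans (Nat.floor_le_ceil _))
  refine ⟨⟨_, hm⟩, abs_le.2 ⟨?_, ?_⟩⟩
  · have := Nat.floor_le h0
    rw [le_div_iff₀ hδ] at this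
    simp only
    nlinarith
  · have := Nat.lt_floor_add_one ((t + M) / δ)
    rw [div_lt_iff₀ hδ] at this
    simp only
    nlinarith

lemma closedBall_subset_iUnion_closedBall_grid {k n : ℕ} (M : ℝ) {δ : ℝ} (hδ : 0 < δ) :
    Metric.closedBall (0 : Fin k → Euc n) M ⊆
      ⋃ m : Fin k → Fin n → Fin (⌈2 * M / δ⌉₊ + 1),
        Metric.closedBall (fun s => WithLp.toLp 2 fun j => -M + δ * (m s j : ℕ)) (n * δ) := by
  intro y hy
  rw [mem_closedBall_zero_iff] at hy
  choose m hm using fun s j =>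
    exists_abs_sub_grid_le hδ (((PiLp.norm_apply_le _ j).trans (norm_le_pi_norm y s)).trans hy)
  refine Set.mem_iUnion.2 ⟨m, ?_⟩
  rw [Metric.mem_closedBall, dist_eq_norm, pi_norm_le_iff_of_nonneg (by positivity)]
  exact fun s => norm_le_mul_of_forall_abs_le _ hδ.le fun j => by simpa using hm s j

lemma natCast_ceil_add_one_le {M ε b : ℝ} (hM : 0 ≤ M) (hε : 0 < ε) (hε1 : ε ≤ 1) (hb : 0 < b) :
    ((⌈2 * M / (ε / b)⌉₊ + 1 : ℕ) : ℝ) ≤ (2 * b * M + 2) / ε := by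
  have hceil := Nat.ceil_lt_add_one (by positivity : (0 : ℝ) ≤ 2 * M / (ε / b))
  have hMε : 2 * M / (ε / b) * ε = 2 * b * M := by field_simp
  rw [le_div_iff₀ hε]
  push_cast
  nlinarith

lemma exists_half_lt_measure_closedBall {X : Type*} [PseudoMetricSpace X] [MeasurableSpace X]
    [OpensMeasurableSpace X] (μ : Measure X) [IsProbabilityMeasure μ] (x : X) :
    ∃ M : ℕ, 1 / 2 < μ (Metric.closedBall x M) := by
  have := tendsto_measure_iUnion_atTop (μ := μ)
    (fun m n hmn => Metric.closedBall_subset_closedBall (by exact_mod_cast hmn) : Monotone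
      fun M : ℕ => Metric.closedBall x M)
  rw [Metric.iUnion_closedBall_nat, measure_univ] at this
  exact (this.eventually (lt_mem_nhds (ENNReal.half_lt_self one_ne_zero ENNReal.one_ne_top))).exists

lemma ofReal_lt_of_subset_iUnion {X ι : Type*} [MeasurableSpace X] [Fintype ι] {μ : Measure X}
    [IsFiniteMeasure μ] {S T : Set X} {B : ι → Set X} (hS : 1 / 2 < μ S) (hSB : S ⊆ ⋃ i, B i)
    (hBT : ∀ i, μ (B i) ≤ μ T) {a : ℝ} (hcard : Fintype.card ι ≤ a) :
    ENNReal.ofReal (1 / (2 * a)) < μ T := by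
  have hST : 1 / 2 < Fintype.card ι * μ T :=
    calc 1 / 2 < μ S := hS
      _ ≤ ∑ i, μ (B i) := (measure_mono hSB).trans (measure_iUnion_fintype_le μ B)
      _ ≤ ∑ _i : ι, μ T := Finset.sum_le_sum fun i _ => hBT i
      _ = Fintype.card ι * μ T := by rw [Finset.sum_const, Finset.card_univ, nsmul_eq_mul]
  rw [← ofReal_measureReal, ← ENNReal.ofReal_natCast, ← ENNReal.ofReal_mul (by positivity),
    show (1 / 2 : ENNReal) = ENNReal.ofReal (1 / 2) by
      rw [ENNReal.ofReal_div_of_pos two_pos, ENNReal.ofReal_one, ENNReal.ofReal_ofNat],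
    ENNReal.ofReal_lt_ofReal_iff_of_nonneg (by norm_num)] at hST
  have ht : 0 < μ.real T := by nlinarith [measureReal_nonneg (μ := μ) (s := T)]
  rw [← ofReal_measureReal, ENNReal.ofReal_lt_ofReal_iff ht, div_lt_iff₀ (by nlinarith)]
  nlinarith

lemma map_closedBall_le_map_cube {k d : ℕ} (hk : 0 < k) (hkd : k < d) {lam : Measure (Grass k d)}
    (hinv : IsOrthInvariant lam) {κ : Grass k d → (Fin k → Euc (d - k))} (hκmeas : Measurable κ)
    (hκ : ∀ᵐ W ∂lam, W.1 = graphY hkd.le (κ W)) {ε : ℝ} (hε : 0 < ε)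
    (hεkd : k * (d - k : ℕ) * ε ≤ 1) (y₀ : Fin k → Euc (d - k)) :
    lam.map κ (Metric.closedBall y₀ (ε / (16 * k))) ≤
      lam.map κ {y | ∀ s j, y s j ∈ Set.Icc (0 : ℝ) ε} := by
  have hk' : (1 : ℝ) ≤ k := by exact_mod_cast hk
  have hdk : (1 : ℝ) ≤ (d - k : ℕ) := by exact_mod_cast Nat.sub_pos_of_lt hkd
  set c : Fin k → Euc (d - k) := fun _ => WithLp.toLp 2 fun _ => ε / 2
  have hc : k * ‖c‖ ≤ 1 := by
    have : ‖c‖ ≤ (d - k : ℕ) * (ε / 2) :=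
      (pi_norm_le_iff_of_nonneg (by positivity)).2 fun s =>
        norm_le_mul_of_forall_abs_le _ (by positivity) fun j => (abs_of_pos (half_pos hε)).le
    nlinarith
  obtain ⟨σ, hσ⟩ := exists_linearIsometryEquiv_map_eq
    (S := graphY hkd.le y₀) (T := graphY hkd.le c) (by rw [finrank_graphY, finrank_graphY])
  refine map_apply_le_of_rotGrass hkd.le hinv hκmeas hκ σ Metric.isClosed_closedBall.measurableSet
    (measurableSet_cube ε) fun Y hY => ?_
  rw [Metric.mem_closedBall, dist_eq_norm] at hY
  obtain ⟨Y', hσY, hY'⟩ := exists_map_graphY_eq_graphY_near hkd.le σ hσ hc hY (by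
    rw [mul_div_assoc', div_le_iff₀ (by positivity)]
    nlinarith)
  refine ⟨Y', mem_cube_of_mem_closedBall ?_, hσY⟩
  rw [Metric.mem_closedBall, dist_eq_norm]
  convert hY' using 1
  field_simp
  ring

/-- **Lemma 9.** There is `c = c(k,d) > 0` such that for all small enough `ε > 0`,
`ν([0,ε]^{(d-k)k}) > c ε^{(d-k)k}`, where `ν` is the pushforward of the invariant measure `λ`
on `G(k,d)` under the coordinate map `κ`. -/
theorem xi_lb (k d : ℕ) (hk : 1 ≤ k) (hkd : k < d)
    (lam : Measure (Grass k d)) (hprob : IsProbabilityMeasure lam) (hinv : IsOrthInvariant lam)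
    (κ : Grass k d → (Fin k → Euc (d-k))) (hκmeas : Measurable κ)
    (hκ : ∀ᵐ W ∂lam, W.1 = Submodule.span ℝ
      (Set.range fun s : Fin k => pairFun hkd.le (EuclideanSpace.single s 1) (κ W s))) :
    ∃ c : ℝ, 0 < c ∧ ∃ ε0 : ℝ, 0 < ε0 ∧ ∀ ε : ℝ, 0 < ε → ε < ε0 →
      ENNReal.ofReal (c * ε ^ (((d:ℝ)-k) * k)) <
        Measure.map κ lam {y | ∀ s j, y s j ∈ Set.Icc (0:ℝ) ε} := by
  have := Measure.isProbabilityMeasure_map (μ := lam) hκmeas.aemeasurable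
  obtain ⟨M, hM⟩ := exists_half_lt_measure_closedBall (lam.map κ) 0
  have hk' : (1 : ℝ) ≤ k := by exact_mod_cast hk
  have hdk : (1 : ℝ) ≤ (d - k : ℕ) := by exact_mod_cast Nat.sub_pos_of_lt hkd
  set b : ℝ := 16 * k * (d - k : ℕ)
  refine ⟨1 / (2 * (2 * b * M + 2) ^ ((d - k) * k)), by positivity, 1 / (k * (d - k : ℕ)),
    by positivity, fun ε hε hεlt => ?_⟩
  rw [lt_div_iff₀ (by positivity)] at hεlt
  have hε1 : ε ≤ 1 := by nlinarith [one_le_mul_of_one_le_of_one_le hk' hdk]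
  have hcard : (Fintype.card (Fin k → Fin (d - k) → Fin (⌈2 * M / (ε / b)⌉₊ + 1)) : ℝ) ≤
      ((2 * b * M + 2) / ε) ^ ((d - k) * k) := by
    simp only [Fintype.card_fun, Fintype.card_fin, ← pow_mul, Nat.cast_pow]
    gcongr
    exact natCast_ceil_add_one_le M.cast_nonneg hε hε1 (by positivity)
  have hball : ((d - k : ℕ) : ℝ) * (ε / b) = ε / (16 * k) := by simp only [b]; field_simp
  have key := ofReal_lt_of_subset_iUnion hM
    (closedBall_subset_iUnion_closedBall_grid M (by positivity : 0 < ε / b))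
    (fun m => hball ▸ map_closedBall_le_map_cube hk hkd hinv hκmeas hκ hε (by linarith) _) hcard
  convert key using 2
  rw [show ((d : ℝ) - k) * k = (((d - k) * k : ℕ) : ℝ) by push_cast [Nat.cast_sub hkd.le]; ring,
    Real.rpow_natCast, div_pow]
  field_simp
end
end

section
/- There is a constant c = c(k,d) > 0 such that for every orthonormal set of vectors u_1,…,u_k in ℝ^d there exists a permutation σ of {1,…,d} such that |⟨u_i, e_{σ(i)}⟩| ≥ c for all i = 1,…,k. -/
open MeasureTheory Filter Set
open scoped RealInnerProductSpace

noncomputable section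

/-!
Orthonormal vectors `u₁,…,u_k` are linearly independent, so any `s` of them span an
`#s`-dimensional space lying in the coordinate subspace of their joint support; by Hall's marriage
theorem the supports therefore admit distinct representatives, which a permutation `σ` of the
coordinates realises: `∏ᵢ |⟨uᵢ, e_{σ(i)}⟩| > 0`. The best such product over `σ` is a continuous
function of `(u₁,…,u_k)`, so it is bounded below by some `c > 0` on the compact set of orthonormal
families; since all coordinates of unit vectors are at most `1` in absolute value, every factor of
the optimal product is at least `c`.
-/

theorem Finset.prod_le_of_mem_of_le_one {ι R : Type*} [CommMonoidWithZero R] [PartialOrder R]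
    [ZeroLEOneClass R] [PosMulMono R] {s : Finset ι} {f : ι → R} {i : ι} (hi : i ∈ s)
    (h0 : ∀ j ∈ s, 0 ≤ f j) (h1 : ∀ j ∈ s, f j ≤ 1) : ∏ j ∈ s, f j ≤ f i := by
  classical
  rw [← Finset.mul_prod_erase s f hi]
  exact mul_le_of_le_one_right (h0 i hi)
    (Finset.prod_le_one (fun j hj => h0 j (Finset.mem_of_mem_erase hj))
      fun j hj => h1 j (Finset.mem_of_mem_erase hj))

theorem exists_injective_apply_ne_zero_of_linearIndependent {ι n K : Type*} [Fintype n] [Field K]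
    {u : ι → n → K} (hu : LinearIndependent K u) :
    ∃ f : ι → n, Function.Injective f ∧ ∀ i, u i (f i) ≠ 0 := by
  classical
  let supp : ι → Finset n := fun i => {j | u i j ≠ 0}
  have hall : ∀ s : Finset ι, s.card ≤ (s.biUnion supp).card := by
    intro s
    let coords : Finset (n → K) := (s.biUnion supp).image (Pi.basisFun K n)
    have hspan : Set.range (fun i : s => u i) ⊆ Submodule.span K (coords : Set (n → K)) := by
      rintro _ ⟨i, rfl⟩
      rw [SetLike.mem_coe, Finset.coe_image, Module.Basis.mem_span_image]
      intro j hj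
      simp only [Pi.basisFun_repr, Finset.mem_coe, Finsupp.mem_support_iff] at hj
      simp only [Finset.coe_biUnion, Set.mem_iUnion, Finset.mem_coe]
      exact ⟨i, i.2, by simpa [supp] using hj⟩
    calc s.card = Fintype.card s := (Fintype.card_coe s).symm
      _ ≤ (Set.range fun i : s => u i).finrank K :=
        linearIndependent_iff_card_le_finrank_span.1 (hu.comp _ Subtype.val_injective)
      _ ≤ (coords : Set (n → K)).finrank K :=
        Submodule.finrank_mono (Submodule.span_le.2 hspan)
      _ ≤ coords.card := finrank_span_finset_le_card _
      _ ≤ (s.biUnion supp).card := Finset.card_image_le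
  obtain ⟨f, hf, hsupp⟩ := (Finset.all_card_le_biUnion_card_iff_exists_injective supp).1 hall
  exact ⟨f, hf, fun i => by simpa [supp] using hsupp i⟩

theorem isCompact_setOf_orthonormal {ι E : Type*} [Fintype ι] [NormedAddCommGroup E]
    [InnerProductSpace ℝ E] [ProperSpace E] : IsCompact {u : ι → E | Orthonormal ℝ u} := by
  classical
  have hclosed : IsClosed {u : ι → E | Orthonormal ℝ u} := by
    have : {u : ι → E | Orthonormal ℝ u} =
        ⋂ (i) (j), {u | ⟪u i, u j⟫ = if i = j then (1 : ℝ) else 0} := by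
      ext u
      simp only [Set.mem_ofPred_eq, Set.mem_iInter, orthonormal_iff_ite]
    rw [this]
    exact isClosed_iInter fun i => isClosed_iInter fun j =>
      isClosed_eq ((continuous_apply i).inner (continuous_apply j)) continuous_const
  refine Metric.isCompact_of_isClosed_isBounded hclosed
    ((Metric.isBounded_closedBall (x := (0 : ι → E)) (r := 1)).subset fun u hu => ?_)
  rw [mem_closedBall_zero_iff]
  exact pi_norm_le_iff_of_nonneg zero_le_one |>.2 fun i => (hu.1 i).le

section MaxPermProd

variable {ι n : Type*} [Fintype ι] [Fintype n] [DecidableEq n]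

def maxPermProd (e : ι → n) (u : ι → EuclideanSpace ℝ n) : ℝ :=
  Finset.univ.sup' Finset.univ_nonempty fun σ : Equiv.Perm n => ∏ i, |u i (σ (e i))|

theorem continuous_maxPermProd (e : ι → n) : Continuous (maxPermProd e) :=
  Continuous.finset_sup'_apply _ fun σ _ => continuous_finsetProd _ fun i _ =>
    ((EuclideanSpace.proj (σ (e i))).continuous.comp (continuous_apply i)).abs

theorem exists_perm_maxPermProd_eq (e : ι → n) (u : ι → EuclideanSpace ℝ n) :
    ∃ σ : Equiv.Perm n, maxPermProd e u = ∏ i, |u i (σ (e i))| := by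
  obtain ⟨σ, -, hσ⟩ := Finset.exists_mem_eq_sup' Finset.univ_nonempty
    fun σ : Equiv.Perm n => ∏ i, |u i (σ (e i))|
  exact ⟨σ, hσ⟩

theorem maxPermProd_pos {e : ι → n} (he : Function.Injective e) {u : ι → EuclideanSpace ℝ n}
    (hu : LinearIndependent ℝ u) : 0 < maxPermProd e u := by
  obtain ⟨f, hf, hfu⟩ := exists_injective_apply_ne_zero_of_linearIndependent
    (hu.map' (WithLp.linearEquiv 2 ℝ (n → ℝ)).toLinearMap (LinearEquiv.ker _))
  obtain ⟨σ, hσ⟩ := Equiv.Perm.exists_extending_pair e f he hf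
  refine lt_of_lt_of_le ?_ (Finset.le_sup' (fun σ : Equiv.Perm n => ∏ i, |u i (σ (e i))|)
    (Finset.mem_univ σ))
  refine Finset.prod_pos fun i _ => abs_pos.2 ?_
  rw [hσ]
  exact hfu i

end MaxPermProd

theorem perm_bases_general (k d : ℕ) (hkd : k ≤ d) :
    ∃ c : ℝ, 0 < c ∧ ∀ u : Fin k → Euc d, Orthonormal ℝ u →
      ∃ σ : Equiv.Perm (Fin d), ∀ i : Fin k,
        c ≤ |⟪u i, EuclideanSpace.single (σ (Fin.castLE hkd i)) 1⟫| := by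
  obtain ⟨c, hc, hcu⟩ := isCompact_setOf_orthonormal.exists_forall_le'
    (continuous_maxPermProd (Fin.castLE hkd)).continuousOn
    fun u hu => maxPermProd_pos (Fin.castLE_injective hkd) hu.linearIndependent
  refine ⟨c, hc, fun u hu => ?_⟩
  obtain ⟨σ, hσ⟩ := exists_perm_maxPermProd_eq (Fin.castLE hkd) u
  refine ⟨σ, fun i => ?_⟩
  have hcoord_le_one : ∀ j, |u j (σ (Fin.castLE hkd j))| ≤ 1 := fun j =>
    (PiLp.norm_apply_le (u j) _).trans_eq (hu.1 j)
  calc c ≤ maxPermProd (Fin.castLE hkd) u := hcu u hu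
    _ = ∏ j, |u j (σ (Fin.castLE hkd j))| := hσ
    _ ≤ |u i (σ (Fin.castLE hkd i))| := Finset.prod_le_of_mem_of_le_one (Finset.mem_univ i)
      (fun j _ => abs_nonneg _) fun j _ => hcoord_le_one j
    _ = |⟪u i, EuclideanSpace.single (σ (Fin.castLE hkd i)) 1⟫| := by
      simp [EuclideanSpace.inner_single_right]

/-- **Lemma 14.** There is `c = c(k,d) > 0` such that for every orthonormal family
`u₁,…,u_k` in `ℝ^d` there is a permutation `σ` of `{1,…,d}` with
`|⟨u_i, e_{σ(i)}⟩| ≥ c` for all `i`. -/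
theorem perm_bases (k d : ℕ) (hk : 1 ≤ k) (hkd : k ≤ d) :
    ∃ c : ℝ, 0 < c ∧ ∀ u : Fin k → Euc d, Orthonormal ℝ u →
      ∃ σ : Equiv.Perm (Fin d), ∀ i : Fin k,
        c ≤ |⟪u i, EuclideanSpace.single (σ (Fin.castLE hkd i)) 1⟫| :=
  perm_bases_general k d hkd

end
end

section
/- There is a constant c = c(k,d) > 0 such that for any orthonormal set of vectors u_1,…,u_k in ℝ^d there exists a permutation σ of {1,…,d} and vectors v_1,…,v_k, with v_i ∈ span{e_{σ(j)}: j = k+1,…,d} and ‖v_i‖_∞ ≤ c for all i, such that span{u_1,…,u_k} = span{e_{σ(1)}+v_1, …, e_{σ(k)}+v_k}. -/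
open MeasureTheory Filter Set
open scoped RealInnerProductSpace

noncomputable section

/-!
Write the `u_i` as the rows of a `k × d` matrix `U` and choose `k` columns `φ` whose minor
`M = U[:, φ]` has maximal `|det|` (it is nonzero since `U` has rank `k`). The matrix `B = M⁻¹ U`
has the same row space as `U` and the identity in the columns `φ`, and by Cramer's rule each
entry of `B` is the quotient of another `k × k` minor of `U` by `det M`, so `|B i c| ≤ 1`.
Permuting coordinates so that `φ` comes first, the rows of `B` are `e_{σ(i)} + v_i` with `v_i`
vanishing on the columns `φ`, and `c = 1` works.
-/

open Matrix Function

namespace Matrix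

variable {K m n : Type*} [DecidableEq m]

theorem injective_of_submatrix_eq_one [Semiring K] [Nontrivial K] {B : Matrix m n K}
    {φ : m → n} (hB : B.submatrix id φ = 1) : Injective φ := by
  intro a b hab
  by_contra hne
  have h := congr_fun (congr_fun hB a) b
  rw [submatrix_apply, id, ← hab, one_apply_ne hne] at h
  simpa using (congr_fun (congr_fun hB a) a).symm.trans h

variable [Fintype m]

theorem span_row_mul_of_isUnit [CommRing K] {A : Matrix m m K} (hA : IsUnit A)
    (U : Matrix m n K) :
    Submodule.span K (range (A * U).row) = Submodule.span K (range U.row) := by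
  have hsurj : LinearMap.range A.vecMulLinear = ⊤ :=
    LinearMap.range_eq_top.mpr (vecMul_surjective_iff_isUnit.mpr hA)
  have hcomp : (A * U).vecMulLinear = U.vecMulLinear ∘ₗ A.vecMulLinear :=
    LinearMap.ext fun x => (vecMul_vecMul x A U).symm
  rw [← range_vecMulLinear, ← range_vecMulLinear, hcomp,
    LinearMap.range_comp_of_range_eq_top _ hsurj]

theorem exists_det_submatrix_ne_zero [Field K] [Fintype n] {U : Matrix m n K}
    (hU : LinearIndependent K U.row) : ∃ φ : m → n, (U.submatrix id φ).det ≠ 0 := by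
  obtain ⟨κ, a, ha, hspan, hli⟩ := exists_linearIndependent' K U.col
  have : Fintype κ := @Fintype.ofFinite κ (Finite.of_injective a ha)
  have hcard : Fintype.card κ = Fintype.card m := by
    rw [← hU.rank_matrix, rank_eq_finrank_span_cols, ← hspan,
      linearIndependent_iff_card_eq_finrank_span.mp hli, Set.finrank]
  let e : m ≃ κ := (Fintype.equivOfCardEq hcard).symm
  have hM : IsUnit (U.submatrix id (a ∘ e)) :=
    linearIndependent_cols_iff_isUnit.mp (hli.comp e e.injective)
  exact ⟨a ∘ e, ((isUnit_iff_isUnit_det _).mp hM).ne_zero⟩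

/-- Cramer's rule. Both sides are `0` when `U.submatrix id φ` is singular, since then its
`⁻¹` is `0`. -/
theorem inv_submatrix_mul_apply [Field K] (U : Matrix m n K) (φ : m → n) (i : m) (c : n) :
    ((U.submatrix id φ)⁻¹ * U) i c =
      (U.submatrix id (update φ i c)).det / (U.submatrix id φ).det := by
  have hcol : (U.submatrix id φ).updateCol i (U.col c) = U.submatrix id (update φ i c) := by
    ext r j
    rcases eq_or_ne j i with rfl | hji <;> simp [*]
  change ((U.submatrix id φ)⁻¹ *ᵥ U.col c) i = _
  rw [inv_def, smul_mulVec, ← cramer_eq_adjugate_mulVec, Pi.smul_apply, cramer_apply, hcol,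
    smul_eq_mul, Ring.inverse_eq_inv', div_eq_inv_mul]

theorem abs_inv_submatrix_mul_apply_le_one [Field K] [LinearOrder K] [IsStrictOrderedRing K]
    (U : Matrix m n K) {φ : m → n}
    (hφ : ∀ ψ : m → n, |(U.submatrix id ψ).det| ≤ |(U.submatrix id φ).det|)
    (i : m) (c : n) :
    |((U.submatrix id φ)⁻¹ * U) i c| ≤ 1 := by
  rw [inv_submatrix_mul_apply, abs_div]
  exact div_le_one_of_le₀ (hφ _) (abs_nonneg _)

theorem exists_span_row_eq_submatrix_eq_one_abs_le_one [Field K] [LinearOrder K]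
    [IsStrictOrderedRing K] [Fintype n] {U : Matrix m n K} (hU : LinearIndependent K U.row) :
    ∃ φ : m → n, ∃ B : Matrix m n K, Submodule.span K (range B.row) =
      Submodule.span K (range U.row) ∧ B.submatrix id φ = 1 ∧ ∀ i c, |B i c| ≤ 1 := by
  obtain ⟨ψ, hψ⟩ := exists_det_submatrix_ne_zero hU
  have : Nonempty (m → n) := ⟨ψ⟩
  obtain ⟨φ, hφ⟩ := Finite.exists_max fun φ : m → n => |(U.submatrix id φ).det|
  have hdet : IsUnit (U.submatrix id φ).det :=
    (abs_pos.mp ((abs_pos.mpr hψ).trans_le (hφ ψ))).isUnit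
  have hinv : IsUnit (U.submatrix id φ)⁻¹ :=
    (isUnit_iff_isUnit_det _).mpr (isUnit_nonsing_inv_det _ hdet)
  exact ⟨φ, (U.submatrix id φ)⁻¹ * U, span_row_mul_of_isUnit hinv U, nonsing_inv_mul _ hdet,
    abs_inv_submatrix_mul_apply_le_one U hφ⟩

end Matrix

theorem Fin.exists_perm_castLE_eq {k d : ℕ} (hkd : k ≤ d) {φ : Fin k → Fin d}
    (hφ : Injective φ) : ∃ σ : Equiv.Perm (Fin d), ∀ i, σ (Fin.castLE hkd i) = φ i := by
  let f : Fin d → Fin d := fun x => if h : (x : ℕ) < k then φ ⟨x, h⟩ else x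
  have hf : ∀ i, f (Fin.castLE hkd i) = φ i := fun i => by simp [f]
  obtain ⟨g, hg⟩ := Set.MapsTo.exists_equiv_extend_of_card_eq (t := Finset.univ) (by simp)
    (s := range (Fin.castLE hkd)) (f := f) (fun _ _ => Finset.mem_coe.2 (Finset.mem_univ _))
    (by rintro _ ⟨i, rfl⟩ _ ⟨j, rfl⟩ h; rw [hf, hf] at h; rw [hφ h])
  exact ⟨g.trans (Equiv.subtypeUnivEquiv Finset.mem_univ),
    fun i => (hg _ ⟨i, rfl⟩).trans (hf i)⟩

namespace EuclideanSpace

variable {𝕜 ι : Type*} [RCLike 𝕜]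

theorem span_range_toLp_row {m : Type*} (A : Matrix m ι 𝕜) :
    Submodule.span 𝕜 (range fun i => WithLp.toLp 2 (A i)) =
      (Submodule.span 𝕜 (range A.row)).map
        (WithLp.linearEquiv 2 𝕜 (ι → 𝕜)).symm.toLinearMap := by
  rw [Submodule.map_span, ← range_comp]
  rfl

variable [DecidableEq ι] {κ : Type*} [DecidableEq κ] {B : Matrix κ ι 𝕜} {φ : κ → ι}

theorem toLp_row_sub_single_apply_eq_zero (hB : B.submatrix id φ = 1) (i j : κ) :
    (WithLp.toLp 2 (B i) - EuclideanSpace.single (φ i) 1 : EuclideanSpace 𝕜 ι) (φ j) = 0 := by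
  have hBij : B i (φ j) = if i = j then 1 else 0 := congr_fun (congr_fun hB i) j
  simp [hBij, (injective_of_submatrix_eq_one hB).eq_iff, eq_comm]

theorem abs_toLp_row_sub_single_apply_le_one {B : Matrix κ ι ℝ} (hB : B.submatrix id φ = 1)
    {i : κ} (hle : ∀ c, |B i c| ≤ 1) (c : ι) :
    |(WithLp.toLp 2 (B i) - EuclideanSpace.single (φ i) 1 : EuclideanSpace ℝ ι) c| ≤ 1 := by
  obtain ⟨j, rfl⟩ | hc := em (c ∈ range φ)
  · simp [toLp_row_sub_single_apply_eq_zero hB]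
  · have hci : c ≠ φ i := fun h => hc ⟨i, h.symm⟩
    simpa [hci] using hle c

theorem mem_span_single_perm_image [Fintype ι] (σ : Equiv.Perm ι) (S : Set ι)
    {x : EuclideanSpace 𝕜 ι} (hx : ∀ j ∉ S, x (σ j) = 0) :
    x ∈ Submodule.span 𝕜 ((fun j => EuclideanSpace.single (σ j) (1 : 𝕜)) '' S) := by
  let b := (EuclideanSpace.basisFun ι 𝕜).toBasis.reindex σ.symm
  have hb : b = fun j => EuclideanSpace.single (σ j) (1 : 𝕜) := by
    ext j : 1; simp [b]
  rw [← hb, Module.Basis.mem_span_image]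
  intro j hj
  by_contra hjS
  exact Finsupp.mem_support_iff.mp hj (by simp [b, hx j hjS])

end EuclideanSpace

theorem span_lemma_general (k d : ℕ) (hkd : k ≤ d) :
    ∃ c : ℝ, 0 < c ∧ ∀ u : Fin k → Euc d, Orthonormal ℝ u →
      ∃ σ : Equiv.Perm (Fin d), ∃ v : Fin k → Euc d,
        (∀ i, v i ∈ Submodule.span ℝ
            ((fun j : Fin d => EuclideanSpace.single (σ j) (1:ℝ)) '' {j | k ≤ (j:ℕ)}) ∧
          supNorm (v i) ≤ c) ∧
        Submodule.span ℝ (Set.range u) =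
          Submodule.span ℝ
            (Set.range fun i : Fin k => EuclideanSpace.single (σ (Fin.castLE hkd i)) 1 + v i) := by
  refine ⟨1, one_pos, fun u hu => ?_⟩
  let U : Matrix (Fin k) (Fin d) ℝ := Matrix.of fun i => WithLp.ofLp (u i)
  have hU : LinearIndependent ℝ U.row :=
    hu.linearIndependent.map' (WithLp.linearEquiv 2 ℝ (Fin d → ℝ)).toLinearMap
      (LinearEquiv.ker _)
  obtain ⟨φ, B, hspan, hBφ, hB_le⟩ := exists_span_row_eq_submatrix_eq_one_abs_le_one hU
  obtain ⟨σ, hσ⟩ := Fin.exists_perm_castLE_eq hkd (injective_of_submatrix_eq_one hBφ)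
  refine ⟨σ, fun i => WithLp.toLp 2 (B i) - EuclideanSpace.single (φ i) 1,
    fun i => ⟨EuclideanSpace.mem_span_single_perm_image σ _ fun j hj => ?_,
      Real.iSup_le (EuclideanSpace.abs_toLp_row_sub_single_apply_le_one hBφ (hB_le i))
        zero_le_one⟩, ?_⟩
  · rw [show j = Fin.castLE hkd ⟨j, not_le.mp hj⟩ from rfl, hσ]
    exact EuclideanSpace.toLp_row_sub_single_apply_eq_zero hBφ i _
  · simp only [hσ, add_sub_cancel]
    rw [EuclideanSpace.span_range_toLp_row, hspan, ← EuclideanSpace.span_range_toLp_row]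
    rfl

/-- **Lemma 15.** There is `c = c(k,d) > 0` such that for any orthonormal family `u₁,…,u_k`
in `ℝ^d` there exist a permutation `σ` of `{1,…,d}` and vectors `v_i ∈ span{e_{σ(j)} :
j = k+1,…,d}` with `‖v_i‖_∞ ≤ c`, such that
`span{u₁,…,u_k} = span{e_{σ(1)}+v₁,…,e_{σ(k)}+v_k}`. -/
theorem span_lemma (k d : ℕ) (hk : 1 ≤ k) (hkd : k ≤ d) :
    ∃ c : ℝ, 0 < c ∧ ∀ u : Fin k → Euc d, Orthonormal ℝ u →
      ∃ σ : Equiv.Perm (Fin d), ∃ v : Fin k → Euc d,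
        (∀ i, v i ∈ Submodule.span ℝ
            ((fun j : Fin d => EuclideanSpace.single (σ j) (1:ℝ)) '' {j | k ≤ (j:ℕ)}) ∧
          supNorm (v i) ≤ c) ∧
        Submodule.span ℝ (Set.range u) =
          Submodule.span ℝ
            (Set.range fun i : Fin k => EuclideanSpace.single (σ (Fin.castLE hkd i)) 1 + v i) :=
  span_lemma_general k d hkd

end
end
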